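/- For every natural number n all of whose base-5 digits belong to {0, 2, 4}, A(n) ≡ 23^{e(n)} (mod 25), where e(n) is the number of base-5 digits of n equal to 2 and A denotes the Apéry numbers. -/

import Mathlib

/-!
Modulo 25 a term `C(n,k)² C(n+k,k)²` vanishes as soon as 5 divides one of the two binomial
coefficients. Writing `n = 5m + r` and `k = 5j + s`, Lucas' theorem leaves only the terms with
`s ≤ r` and `r + s < 5`. For these, `C(5a + r', 5b + s') ≡ C(a,b) · (c + 5ℓ(a,b)) (mod 25)`:
this follows from `C(5a, 5b) ≡ C(a, b) (mod 25)` by clearing the ascending factorials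
`(5x + 1) ⋯ (5x + i)`, `i < 5`, which are units. Hence `A(5m) ≡ A(5m + 4) ≡ A(m)`, while for
`r = 2` the three surviving terms of a block are `1 + 5j`, `11` and `11 + 20j` times the
corresponding term of `A(m)`, which add up to `23`. Induction on the base-5 digits concludes.
-/

def apery (n : ℕ) : ℕ := ∑ k ∈ Finset.range (n + 1), (n.choose k)^2 * ((n + k).choose k)^2

open Finset
open scoped Nat

theorem sum_range_mul_eq_sum_sum {M : Type*} [AddCommMonoid M] (f : ℕ → M) (p m : ℕ) :
    ∑ k ∈ range (p * m), f k = ∑ j ∈ range m, ∑ s ∈ range p, f (p * j + s) := by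
  induction m with
  | zero => simp
  | succ m ih => rw [mul_add_one, sum_range_add, ih, sum_range_succ]

theorem choose_add_add_mul_ascFactorial (n k s t : ℕ) :
    (n + k + (s + t)).choose (k + s) * ((k + 1).ascFactorial s * (n + 1).ascFactorial t) =
      (n + k).choose k * (n + k + 1).ascFactorial (s + t) := by
  have hN := Nat.choose_mul_factorial_mul_factorial (show k + s ≤ n + k + (s + t) by omega)
  have hM := Nat.choose_mul_factorial_mul_factorial (show k ≤ n + k by omega)
  rw [show n + k + (s + t) - (k + s) = n + t by omega] at hN
  rw [Nat.add_sub_cancel] at hM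
  apply Nat.eq_of_mul_eq_mul_right (Nat.mul_pos k.factorial_pos n.factorial_pos)
  calc _ = (n + k + (s + t)).choose (k + s) * (k ! * (k + 1).ascFactorial s) *
          (n ! * (n + 1).ascFactorial t) := by ring
    _ = (n + k + (s + t))! := by
      rw [Nat.factorial_mul_ascFactorial, Nat.factorial_mul_ascFactorial, hN]
    _ = _ := by rw [← Nat.factorial_mul_ascFactorial (n + k), ← hM]; ring

section Prime

variable {p : ℕ} [hp : Fact p.Prime]

theorem prime_dvd_choose_of_mod_lt {n k : ℕ} (h : n % p < k % p) : p ∣ n.choose k := by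
  have := Choose.choose_modEq_choose_mod_mul_choose_div_nat (n := n) (k := k) (p := p)
  rw [Nat.choose_eq_zero_of_lt h, zero_mul] at this
  exact Nat.modEq_zero_iff_dvd.mp this

theorem not_dvd_ascFactorial_mul_add_one (x : ℕ) {t : ℕ} (ht : t < p) :
    ¬ p ∣ (p * x + 1).ascFactorial t := by
  induction t with
  | zero => simpa using hp.out.ne_one
  | succ t ih =>
    rw [Nat.ascFactorial_succ, hp.out.dvd_mul, add_assoc, Nat.dvd_add_right (dvd_mul_right p x)]
    rintro (h | h)
    · exact absurd (Nat.le_of_dvd (by omega) h) (by omega)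
    · exact ih (by omega) h

theorem cast_choose_mul_mul (a b : ℕ) : ((p * a).choose (p * b) : ZMod (p ^ 2)) = a.choose b := by
  induction a generalizing b with
  | zero => cases b <;> simp [Nat.choose_eq_zero_of_lt, hp.out.pos]
  | succ a ih =>
    cases b with
    | zero => simp
    | succ b =>
      -- Vandermonde for `p * a + p`: the terms `C(pa, i) C(p, j)`, `0 < j < p`, vanish mod `p²`.
      rw [mul_add_one p a, Nat.add_choose_eq, Nat.cast_sum,
        sum_eq_add_of_mem (p * (b + 1), 0) (p * b, p) (by simp) (by simp [mul_add_one])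
          (by simp [hp.out.ne_zero])]
      · push_cast [Nat.choose_zero_right, Nat.choose_self, mul_one, ih, Nat.choose_succ_succ']
        exact add_comm _ _
      · rintro ⟨i, j⟩ hij ⟨hne₀, hneₚ⟩
        rw [HasAntidiagonal.mem_antidiagonal, mul_add_one] at hij
        rcases lt_or_ge p j with hpj | hjp
        · simp [Nat.choose_eq_zero_of_lt hpj]
        have hj₀ : j ≠ 0 := by rintro rfl; exact hne₀ (by simp [mul_add_one]; omega)
        have hjₚ : j ≠ p := by rintro rfl; exact hneₚ (by simp; omega)
        have hi : ¬ p ∣ i := fun hi =>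
          hjₚ (le_antisymm hjp (Nat.le_of_dvd (Nat.pos_of_ne_zero hj₀)
            ((Nat.dvd_add_right hi).mp (hij ▸ (dvd_mul_right p b).add dvd_rfl))))
        rw [ZMod.natCast_eq_zero_iff, sq]
        refine Nat.mul_dvd_mul (prime_dvd_choose_of_mod_lt ?_)
          (hp.out.dvd_choose_self hj₀ (lt_of_le_of_ne hjp hjₚ))
        rw [Nat.mul_mod_right]
        exact Nat.pos_of_ne_zero (mt Nat.dvd_of_mod_eq_zero hi)

theorem cast_choose_mul_add_add (a b s t : ℕ) (hs : s < p) (ht : t < p) {w : ZMod (p ^ 2)}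
    (hw : b ≤ a → ((p * a + 1).ascFactorial (s + t) : ZMod (p ^ 2)) =
      w * (((p * b + 1).ascFactorial s * (p * (a - b) + 1).ascFactorial t : ℕ) : ZMod (p ^ 2))) :
    ((p * a + (s + t)).choose (p * b + s) : ZMod (p ^ 2)) = (a.choose b : ZMod (p ^ 2)) * w := by
  rcases lt_or_ge a b with hab | hba
  · have : p * a + p ≤ p * b := by rw [← mul_add_one]; exact Nat.mul_le_mul_left p hab
    rw [Nat.choose_eq_zero_of_lt hab, Nat.choose_eq_zero_of_lt (by omega)]
    simp
  · obtain ⟨d, rfl⟩ := Nat.exists_eq_add_of_le hba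
    have hunit : IsUnit (((p * b + 1).ascFactorial s * (p * d + 1).ascFactorial t : ℕ) :
        ZMod (p ^ 2)) :=
      (ZMod.isUnit_natCast_iff_not_dvd_pow hp.out two_pos).mpr fun h => (hp.out.dvd_mul.mp h).elim
        (not_dvd_ascFactorial_mul_add_one b hs) (not_dvd_ascFactorial_mul_add_one d ht)
    refine hunit.mul_right_cancel ?_
    have := choose_add_add_mul_ascFactorial (p * d) (p * b) s t
    rw [show p * d + p * b = p * (b + d) by ring] at this
    rw [← Nat.cast_mul, this, Nat.cast_mul, cast_choose_mul_mul, hw hba, Nat.add_sub_cancel_left,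
      mul_assoc]

end Prime

def aperyTerm (n k : ℕ) : ℕ := n.choose k ^ 2 * (n + k).choose k ^ 2

theorem apery_eq_sum_aperyTerm (n : ℕ) : apery n = ∑ k ∈ range (n + 1), aperyTerm n k := rfl

theorem aperyTerm_eq_zero_of_lt {n k : ℕ} (h : n < k) : aperyTerm n k = 0 := by
  simp [aperyTerm, Nat.choose_eq_zero_of_lt h]

theorem cast_aperyTerm_eq_zero {p n k : ℕ} (h : p ∣ n.choose k ∨ p ∣ (n + k).choose k) :
    (aperyTerm n k : ZMod (p ^ 2)) = 0 := by
  rw [ZMod.natCast_eq_zero_iff, aperyTerm]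
  rcases h with h | h
  · exact (pow_dvd_pow_of_dvd h 2).mul_right _
  · exact (pow_dvd_pow_of_dvd h 2).mul_left _

theorem aperyTerm_five_mul_add (m j r s : ℕ) :
    aperyTerm (5 * m + r) (5 * j + s) =
      (5 * m + r).choose (5 * j + s) ^ 2 * (5 * (m + j) + (r + s)).choose (5 * j + s) ^ 2 := by
  rw [aperyTerm, show 5 * m + r + (5 * j + s) = 5 * (m + j) + (r + s) by ring]

theorem apery_five_mul_add_eq_sum_sum (m r : ℕ) (hr : r < 5) :
    apery (5 * m + r) =
      ∑ j ∈ range (m + 1), ∑ s ∈ range 5, aperyTerm (5 * m + r) (5 * j + s) := by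
  rw [← sum_range_mul_eq_sum_sum, apery_eq_sum_aperyTerm]
  refine sum_subset (range_subset_range.mpr (by omega)) fun k hk hk' => aperyTerm_eq_zero_of_lt ?_
  simp only [mem_range] at hk hk'
  omega

theorem cast_apery_five_mul_add (m r : ℕ) (hr : r < 5) {c : ZMod 25}
    (hc : ∀ j, ∑ s ∈ range 5, (aperyTerm (5 * m + r) (5 * j + s) : ZMod 25) =
      c * aperyTerm m j) :
    (apery (5 * m + r) : ZMod 25) = c * apery m := by
  simp only [apery_five_mul_add_eq_sum_sum m r hr, apery_eq_sum_aperyTerm m, Nat.cast_sum, hc,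
    mul_sum]

instance Nat.fact_prime_five : Fact (Nat.Prime 5) := ⟨Nat.prime_five⟩

theorem choose_five_mul_five_mul (a b : ℕ) : ((5 * a).choose (5 * b) : ZMod 25) = a.choose b :=
  cast_choose_mul_mul a b

theorem choose_five_mul_add_two_five_mul (a b : ℕ) :
    ((5 * a + 2).choose (5 * b) : ZMod 25) = a.choose b * (1 + 20 * b) :=
  cast_choose_mul_add_add (p := 5) a b 0 2 (by norm_num) (by norm_num) fun h => by
    push_cast [Nat.ascFactorial, Nat.cast_sub h]; ring_nf; reduce_mod_char

theorem choose_five_mul_add_two_five_mul_add_one (a b : ℕ) :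
    ((5 * a + 2).choose (5 * b + 1) : ZMod 25) = a.choose b * (2 + 5 * a) :=
  cast_choose_mul_add_add (p := 5) a b 1 1 (by norm_num) (by norm_num) fun h => by
    push_cast [Nat.ascFactorial, Nat.cast_sub h]; ring_nf; reduce_mod_char

theorem choose_five_mul_add_two_five_mul_add_two (a b : ℕ) :
    ((5 * a + 2).choose (5 * b + 2) : ZMod 25) = a.choose b * (1 + 20 * (a - b)) :=
  cast_choose_mul_add_add (p := 5) a b 2 0 (by norm_num) (by norm_num) fun h => by
    push_cast [Nat.ascFactorial, Nat.cast_sub h]; ring_nf; reduce_mod_char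

theorem choose_five_mul_add_three_five_mul_add_one (a b : ℕ) :
    ((5 * a + 3).choose (5 * b + 1) : ZMod 25) = a.choose b * (3 + 5 * (a - b)) :=
  cast_choose_mul_add_add (p := 5) a b 1 2 (by norm_num) (by norm_num) fun h => by
    push_cast [Nat.ascFactorial, Nat.cast_sub h]; ring_nf; reduce_mod_char

theorem choose_five_mul_add_four_five_mul (a b : ℕ) :
    ((5 * a + 4).choose (5 * b) : ZMod 25) = a.choose b :=
  (cast_choose_mul_add_add (p := 5) a b 0 4 (by norm_num) (by norm_num) (w := 1) fun h => by
    push_cast [Nat.ascFactorial, Nat.cast_sub h]; ring_nf; reduce_mod_char).trans (mul_one _)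

theorem choose_five_mul_add_four_five_mul_add_two (a b : ℕ) :
    ((5 * a + 4).choose (5 * b + 2) : ZMod 25) = a.choose b * (6 + 5 * a) :=
  cast_choose_mul_add_add (p := 5) a b 2 2 (by norm_num) (by norm_num) fun h => by
    push_cast [Nat.ascFactorial, Nat.cast_sub h]; ring_nf; reduce_mod_char

theorem cast_apery_five_mul (m : ℕ) : (apery (5 * m) : ZMod 25) = apery m := by
  simpa using cast_apery_five_mul_add m 0 (by norm_num) (c := 1) fun j => by
    rw [sum_eq_single 0 (fun s hs hs0 => cast_aperyTerm_eq_zero (p := 5)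
      (.inl (prime_dvd_choose_of_mod_lt (by simp at hs; omega)))) (by simp)]
    rw [aperyTerm_five_mul_add, aperyTerm]
    push_cast
    simp only [add_zero, choose_five_mul_five_mul, one_mul]

theorem cast_apery_five_mul_add_four (m : ℕ) : (apery (5 * m + 4) : ZMod 25) = apery m := by
  simpa using cast_apery_five_mul_add m 4 (by norm_num) (c := 1) fun j => by
    rw [sum_eq_single 0 (fun s hs hs0 => cast_aperyTerm_eq_zero (p := 5)
      (.inr (prime_dvd_choose_of_mod_lt (by simp at hs; omega)))) (by simp)]
    rw [aperyTerm_five_mul_add, aperyTerm]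
    push_cast
    simp only [add_zero, choose_five_mul_add_four_five_mul, one_mul]

theorem cast_apery_five_mul_add_two (m : ℕ) : (apery (5 * m + 2) : ZMod 25) = 23 * apery m :=
  cast_apery_five_mul_add m 2 (by norm_num) fun j => by
    have h₃ : (aperyTerm (5 * m + 2) (5 * j + 3) : ZMod 25) = 0 :=
      cast_aperyTerm_eq_zero (p := 5) (.inl (prime_dvd_choose_of_mod_lt (by omega)))
    have h₄ : (aperyTerm (5 * m + 2) (5 * j + 4) : ZMod 25) = 0 :=
      cast_aperyTerm_eq_zero (p := 5) (.inl (prime_dvd_choose_of_mod_lt (by omega)))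
    simp only [sum_range_succ, sum_range_zero, zero_add]
    rw [h₃, h₄]
    simp only [aperyTerm_five_mul_add]
    push_cast [aperyTerm]
    simp only [add_zero, choose_five_mul_add_two_five_mul, choose_five_mul_add_two_five_mul_add_one,
      choose_five_mul_add_two_five_mul_add_two, choose_five_mul_add_three_five_mul_add_one,
      choose_five_mul_add_four_five_mul_add_two]
    push_cast
    ring_nf
    reduce_mod_char

theorem apery_base_five_digits (n : ℕ)
    (hdig : ∀ e ∈ Nat.digits 5 n, e = 0 ∨ e = 2 ∨ e = 4) :
    apery n ≡ 23 ^ ((Nat.digits 5 n).count 2) [MOD 25] := by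
  rw [← ZMod.natCast_eq_natCast_iff]
  induction n using Nat.strong_induction_on with
  | _ n ih =>
  rcases n.eq_zero_or_pos with rfl | hn
  · simp [apery]
  obtain ⟨m, r, hr, rfl⟩ : ∃ m r, r < 5 ∧ n = r + 5 * m :=
    ⟨n / 5, n % 5, n.mod_lt (by norm_num), (Nat.mod_add_div n 5).symm⟩
  rw [Nat.digits_add 5 (by norm_num) r m hr (by omega)] at hdig ⊢
  have hm := ih m (by omega) fun e he => hdig e (List.mem_cons_of_mem r he)
  push_cast at hm ⊢
  rw [add_comm, List.count_cons]
  rcases hdig r List.mem_cons_self with rfl | rfl | rfl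
  · simp [cast_apery_five_mul, hm]
  · simp [cast_apery_five_mul_add_two, hm, pow_succ']
  · simp [cast_apery_five_mul_add_four, hm]
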